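/- For the comultiplication Δ, antipode S, and divided powers in the integral form of the quantized enveloping algebra U_q(gl_n), one has for every l ≥ 1 and each index i: ∑_{k=0}^{l-1} (-q^{l-1})^{-k} (f_i^{(k)} ⊗ 1) · Δ(f_i^{(l-k)}) = (K_i^l ⊗ 1) · (1 ⊗ f_i^{(l)} − S(f_i^{(l)}) ⊗ 1). -/

import Mathlib

/-! Extend the sum to `k = l`; the added term is `(-1)^l q^{-l(l-1)} f^{(l)} ⊗ 1`, which is
`(K^l ⊗ 1)(S(f^{(l)}) ⊗ 1)`. Expanding `(f^{(k)} ⊗ 1) Δ(f^{(l-k)})` by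
`f^{(k)} f^{(l-k-j)} = [l-j choose k] f^{(l-j)}`, the extended sum is
`∑_j c_j f^{(l-j)} K^j ⊗ f^{(j)}` with `c_j` equal, up to a power of `q`, to
`∑_k (-1)^k q^{-k(m-1)} [m choose k]` for `m = l - j`. By the `q`-binomial theorem this vanishes
for `m ≥ 1`, so only `K^l ⊗ f^{(l)}` survives. -/

namespace QuantumGL

noncomputable section

/-- The field `ℚ(q)` of rational functions. -/
abbrev Qq := FractionRing (Polynomial ℚ)

open scoped TensorProduct

variable (q : Qqˣ)

/-- The balanced quantum integer `[l]_q = ∑_{i=0}^{l-1} q^{2i−l+1}`. -/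
def qInt (l : ℕ) : Qq := ∑ i ∈ Finset.range l, ((q ^ (2 * (i : ℤ) - l + 1) : Qqˣ) : Qq)

/-- The quantum factorial `[l]_q!`. -/
def qFact (l : ℕ) : Qq := ∏ i ∈ Finset.range l, qInt q (i + 1)

/-- The Gaussian binomial coefficient `[l choose k]_q = [l]_q!/([k]_q! [l−k]_q!)`. -/
def qBinom (l k : ℕ) : Qq := qFact q l / (qFact q k * qFact q (l - k))

variable {A : Type*} [Ring A] [Algebra Qq A]
  (F : ℕ → A) (K : Aˣ)

/-- The explicit formula for `Δ(f_i^{(l)}) = ∑_{k=0}^{l} q^{−k(l−k)} f_i^{(l−k)} K_i^k ⊗ f_i^{(k)}`,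
where `F l = f_i^{(l)}` and `K = K_i`. -/
def comulF (l : ℕ) : A ⊗[Qq] A :=
  ∑ k ∈ Finset.range (l + 1),
    ((q ^ (-((k : ℤ) * ((l : ℤ) - (k : ℤ)))) : Qqˣ) : Qq) •
      ((F (l - k) * (K : A) ^ k) ⊗ₜ[Qq] F k)

/-- The explicit formula for `S(f_i^{(l)}) = (−1)^l q^{−l(l−1)} K_i^{−l} f_i^{(l)}`. -/
def antipodeF (l : ℕ) : A :=
  ((-1 : Qq) ^ l * ((q ^ (-((l : ℤ) * ((l : ℤ) - 1))) : Qqˣ) : Qq)) •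
    (((K ^ (-(l : ℤ)) : Aˣ) : A) * F l)

open Finset

theorem injective_aeval_liouvilleNumber :
    Function.Injective (Polynomial.aeval (R := ℚ) (liouvilleNumber 3)) :=
  transcendental_iff_injective.mp fun h =>
    transcendental_liouvilleNumber (by norm_num) ((IsFractionRing.isAlgebraic_iff ℤ ℚ ℝ).mpr h)

def realEmbedding : Qq →ₐ[ℚ] ℝ :=
  IsFractionRing.liftAlgHom injective_aeval_liouvilleNumber

theorem qInt_eq_sum_zpow (l : ℕ) :
    qInt q l = ∑ i ∈ range l, (q : Qq) ^ (2 * (i : ℤ) - l + 1) :=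
  sum_congr rfl fun _ _ => Units.val_zpow_eq_zpow_val _ _

theorem qInt_add (a b : ℕ) :
    qInt q (a + b) = (q : Qq) ^ (-(b : ℤ)) * qInt q a + (q : Qq) ^ (a : ℤ) * qInt q b := by
  simp only [qInt_eq_sum_zpow, sum_range_add, mul_sum, ← zpow_add₀ q.ne_zero]
  congr 1 <;> refine sum_congr rfl fun _ _ => ?_ <;> congr 1 <;> push_cast <;> ring

theorem zpow_mul_qInt_succ (n : ℕ) :
    (q : Qq) ^ (n : ℤ) * qInt q (n + 1) = ∑ i ∈ range (n + 1), ((q : Qq) ^ i) ^ 2 := by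
  rw [qInt_eq_sum_zpow, mul_sum]
  refine sum_congr rfl fun _ _ => ?_
  rw [← zpow_add₀ q.ne_zero, ← pow_mul, ← zpow_natCast]
  congr 1
  push_cast
  ring

/-- Over `ℝ`, `q^n [n+1]_q` becomes a sum of squares containing the term `1`. -/
theorem qInt_succ_ne_zero (n : ℕ) : qInt q (n + 1) ≠ 0 := by
  intro h
  have hsum := congrArg realEmbedding (zpow_mul_qInt_succ q n)
  rw [h, mul_zero, map_zero, map_sum, sum_range_succ'] at hsum
  simp only [map_pow, pow_zero, map_one, one_pow] at hsum
  refine (?_ : (0 : ℝ) < _).ne hsum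
  positivity

@[simp] theorem qFact_zero : qFact q 0 = 1 :=
  prod_range_zero _

theorem qFact_succ (n : ℕ) : qFact q (n + 1) = qFact q n * qInt q (n + 1) :=
  prod_range_succ _ _

theorem qFact_ne_zero (n : ℕ) : qFact q n ≠ 0 :=
  prod_ne_zero_iff.mpr fun i _ => qInt_succ_ne_zero q i

@[simp] theorem qBinom_zero_right (n : ℕ) : qBinom q n 0 = 1 := by
  rw [qBinom, Nat.sub_zero, qFact_zero, one_mul, div_self (qFact_ne_zero q n)]

@[simp] theorem qBinom_self (n : ℕ) : qBinom q n n = 1 := by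
  rw [qBinom, Nat.sub_self, qFact_zero, mul_one, div_self (qFact_ne_zero q n)]

theorem qBinom_succ_succ {n k : ℕ} (h : k + 1 ≤ n) :
    qBinom q (n + 1) (k + 1) =
      (q : Qq) ^ (-((k : ℤ) + 1)) * qBinom q n (k + 1) +
        (q : Qq) ^ ((n : ℤ) - k) * qBinom q n k := by
  obtain ⟨a, rfl⟩ : ∃ a, n = k + 1 + a := ⟨n - (k + 1), by omega⟩
  have hint : qInt q (k + 1 + a + 1) =
      (q : Qq) ^ (-((k : ℤ) + 1)) * qInt q (a + 1) + (q : Qq) ^ ((a : ℤ) + 1) * qInt q (k + 1) := by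
    rw [show k + 1 + a + 1 = a + 1 + (k + 1) by omega, qInt_add]
    push_cast
    ring
  rw [qBinom, qBinom, qBinom, show k + 1 + a + 1 - (k + 1) = a + 1 by omega,
    show k + 1 + a - (k + 1) = a by omega, show k + 1 + a - k = a + 1 by omega,
    qFact_succ q (k + 1 + a), hint, qFact_succ q a, qFact_succ q k]
  have := qInt_succ_ne_zero q a
  have := qInt_succ_ne_zero q k
  have := qFact_ne_zero q k
  have := qFact_ne_zero q a
  push_cast
  rw [show ((k : ℤ) + 1 + a) - k = (a : ℤ) + 1 by ring]
  field_simp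

/-- The balanced `q`-binomial theorem `∏_{i<m} (1 + q^{2i} z) = ∑_k q^{k(m-1)} [m choose k] z^k`
at `z = -q^{2(1-m)}`, where the factor `i = m - 1` vanishes. Pascal's rule makes the sum
telescope. -/
theorem sum_neg_one_pow_mul_zpow_mul_qBinom {m : ℕ} (hm : 1 ≤ m) :
    ∑ k ∈ range (m + 1), (-1 : Qq) ^ k * (q : Qq) ^ (-((k : ℤ) * ((m : ℤ) - 1))) * qBinom q m k
      = 0 := by
  obtain ⟨n, rfl⟩ : ∃ n, m = n + 1 := ⟨m - 1, by omega⟩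
  set b : ℕ → Qq := fun k => (-1 : Qq) ^ k * (q : Qq) ^ (-((k : ℤ) * ((n : ℤ) + 1))) * qBinom q n k
  have htelescope : ∀ k ∈ range n,
      (-1 : Qq) ^ (k + 1) * (q : Qq) ^ (-(((k + 1 : ℕ) : ℤ) * (((n + 1 : ℕ) : ℤ) - 1))) *
        qBinom q (n + 1) (k + 1) = b (k + 1) - b k := by
    intro k hk
    rw [qBinom_succ_succ q (mem_range.mp hk)]
    simp only [b]
    push_cast
    ring_nf
    simp only [← zpow_add₀ q.ne_zero]
    ring_nf
  rw [sum_range_succ, sum_range_succ', sum_congr rfl htelescope, sum_range_sub b]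
  simp only [b, qBinom_self, qBinom_zero_right]
  push_cast
  ring_nf

theorem sum_neg_one_pow_mul_zpow_mul_qBinom_sub {l j : ℕ} (hj : j ≤ l) :
    ∑ k ∈ range (l - j + 1), (-1 : Qq) ^ k *
        (q : Qq) ^ (-((k : ℤ) * ((l : ℤ) - 1)) + -((j : ℤ) * ((l : ℤ) - k - j))) *
          qBinom q (l - j) k
      = if j = l then 1 else 0 := by
  split_ifs with hjl
  · simp [hjl]
  have hfactor : ∀ k ∈ range (l - j + 1),
      (-1 : Qq) ^ k * (q : Qq) ^ (-((k : ℤ) * ((l : ℤ) - 1)) + -((j : ℤ) * ((l : ℤ) - k - j))) *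
          qBinom q (l - j) k =
        (q : Qq) ^ (-((j : ℤ) * (l - j))) *
          ((-1 : Qq) ^ k * (q : Qq) ^ (-((k : ℤ) * (((l - j : ℕ) : ℤ) - 1))) *
            qBinom q (l - j) k) := by
    intro k _
    rw [Nat.cast_sub hj, show -((k : ℤ) * ((l : ℤ) - 1)) + -((j : ℤ) * ((l : ℤ) - k - j)) =
      -((j : ℤ) * (l - j)) + -((k : ℤ) * ((l : ℤ) - j - 1)) by ring, zpow_add₀ q.ne_zero]
    ring
  rw [sum_congr rfl hfactor, ← mul_sum, sum_neg_one_pow_mul_zpow_mul_qBinom q (by omega), mul_zero]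

theorem comulF_zero (hF0 : F 0 = 1) : comulF q F K 0 = 1 := by
  simp [comulF, hF0, Algebra.TensorProduct.one_def]

theorem pow_mul_antipodeF (l : ℕ) :
    (K : A) ^ l * antipodeF q F K l =
      ((-1 : Qq) ^ l * ((q ^ (-((l : ℤ) * ((l : ℤ) - 1))) : Qqˣ) : Qq)) • F l := by
  have hK : (K : A) ^ l * ((K ^ (-(l : ℤ)) : Aˣ) : A) = 1 := by
    rw [zpow_neg, zpow_natCast, ← Units.val_pow_eq_pow_val, Units.mul_inv]
  rw [antipodeF, mul_smul_comm, ← mul_assoc, hK, one_mul]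

theorem tmul_one_mul_comulF (hFmul : ∀ k l : ℕ, F k * F l = qBinom q (k + l) k • F (k + l))
    {k l : ℕ} (hk : k ≤ l) :
    (F k ⊗ₜ[Qq] (1 : A)) * comulF q F K (l - k) =
      ∑ j ∈ range (l - k + 1),
        ((q : Qq) ^ (-((j : ℤ) * ((l : ℤ) - k - j))) * qBinom q (l - j) k) •
          ((F (l - j) * (K : A) ^ j) ⊗ₜ[Qq] F j) := by
  rw [comulF, mul_sum]
  refine sum_congr rfl fun j hj => ?_
  rw [mul_smul_comm, Algebra.TensorProduct.tmul_mul_tmul, one_mul, ← mul_assoc, hFmul,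
    show k + (l - k - j) = l - j by have := mem_range.mp hj; omega, smul_mul_assoc,
    ← TensorProduct.smul_tmul', smul_smul, Units.val_zpow_eq_zpow_val, Nat.cast_sub hk, sub_sub]

theorem sum_smul_tmul_one_mul_comulF (hF0 : F 0 = 1)
    (hFmul : ∀ k l : ℕ, F k * F l = qBinom q (k + l) k • F (k + l)) (l : ℕ) :
    ∑ k ∈ range (l + 1), ((-1 : Qq) ^ k * ((q ^ (-((k : ℤ) * ((l : ℤ) - 1))) : Qqˣ) : Qq)) •
        ((F k ⊗ₜ[Qq] (1 : A)) * comulF q F K (l - k)) =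
      ((K : A) ^ l) ⊗ₜ[Qq] F l := by
  set T : ℕ → A ⊗[Qq] A := fun j => (F (l - j) * (K : A) ^ j) ⊗ₜ[Qq] F j
  calc _ = ∑ k ∈ range (l + 1), ∑ j ∈ range (l - k + 1), ((-1 : Qq) ^ k *
          (q : Qq) ^ (-((k : ℤ) * ((l : ℤ) - 1)) + -((j : ℤ) * ((l : ℤ) - k - j))) *
          qBinom q (l - j) k) • T j := by
        refine sum_congr rfl fun k hk => ?_
        rw [tmul_one_mul_comulF q F K hFmul (Nat.lt_succ_iff.mp (mem_range.mp hk)), smul_sum]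
        refine sum_congr rfl fun j _ => ?_
        rw [smul_smul, Units.val_zpow_eq_zpow_val, zpow_add₀ q.ne_zero]
        congr 1
        ring
    _ = ∑ j ∈ range (l + 1), ∑ k ∈ range (l - j + 1), ((-1 : Qq) ^ k *
          (q : Qq) ^ (-((k : ℤ) * ((l : ℤ) - 1)) + -((j : ℤ) * ((l : ℤ) - k - j))) *
          qBinom q (l - j) k) • T j :=
        sum_comm' (t' := range (l + 1)) (s' := fun j => range (l - j + 1)) fun k j => by
          simp only [mem_range]
          omega
    _ = ∑ j ∈ range (l + 1), (if j = l then (1 : Qq) else 0) • T j := by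
        refine sum_congr rfl fun j hj => ?_
        rw [← sum_smul,
          sum_neg_one_pow_mul_zpow_mul_qBinom_sub q (Nat.lt_succ_iff.mp (mem_range.mp hj))]
    _ = ((K : A) ^ l) ⊗ₜ[Qq] F l := by
        simp [ite_smul, T, hF0]

theorem divided_power_f_identity
    (hF0 : F 0 = 1)
    (hFmul : ∀ k l : ℕ, F k * F l = qBinom q (k + l) k • F (k + l))
    (l : ℕ) :
    ∑ k ∈ Finset.range l,
        ((-1 : Qq) ^ k * ((q ^ (-((k : ℤ) * ((l : ℤ) - 1))) : Qqˣ) : Qq)) •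
          ((F k ⊗ₜ[Qq] (1 : A)) * comulF q F K (l - k)) =
      (((K : A) ^ l) ⊗ₜ[Qq] (1 : A)) *
        ((1 : A) ⊗ₜ[Qq] F l - antipodeF q F K l ⊗ₜ[Qq] (1 : A)) := by
  have hsum := sum_smul_tmul_one_mul_comulF q F K hF0 hFmul l
  rw [sum_range_succ, Nat.sub_self, comulF_zero q F K hF0, mul_one] at hsum
  rw [mul_sub, Algebra.TensorProduct.tmul_mul_tmul, Algebra.TensorProduct.tmul_mul_tmul,
    pow_mul_antipodeF, mul_one, one_mul, mul_one, ← TensorProduct.smul_tmul', ← hsum,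
    add_sub_cancel_right]

end

end QuantumGL
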